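/- Let g ≥ 2, let Γ_g be the genus-g surface group, and let α : Γ_g → ℂˣ be a nontrivial group homomorphism. Then the map γ ↦ 1 − α(γ) is a nonzero element of Z¹_α(Γ_g,ℂ), and the quotient ℂ-vector space H¹_α(Γ_g,ℂ) := Z¹_α(Γ_g,ℂ) / ℂ·(1 − α) has dimension 2g − 2. -/

import Mathlib

/-- The surface group relator `∏ i, [aᵢ, bᵢ]` in the free group on `Fin g × Bool`,
where `(i, true)` plays the role of `aᵢ` and `(i, false)` the role of `bᵢ`. -/
def surfaceRelator (g : ℕ) : FreeGroup (Fin g × Bool) :=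
  (List.ofFn fun i : Fin g =>
    FreeGroup.of (i, true) * FreeGroup.of (i, false) *
      (FreeGroup.of (i, true))⁻¹ * (FreeGroup.of (i, false))⁻¹).prod

/-- The genus-`g` surface group `⟨a₁,b₁,…,a_g,b_g | ∏ᵢ [aᵢ,bᵢ]⟩`. -/
def SurfaceGroup (g : ℕ) : Type :=
  PresentedGroup ({surfaceRelator g} : Set (FreeGroup (Fin g × Bool)))

instance (g : ℕ) : Group (SurfaceGroup g) := by
  unfold SurfaceGroup; infer_instance

/-- The space `Z¹_α(G, ℂ)` of `α`-twisted cocycles, as a `ℂ`-subspace of `G → ℂ`. -/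
noncomputable def twistedCocycles {G : Type*} [Group G] (α : G →* ℂˣ) : Submodule ℂ (G → ℂ) where
  carrier := {l | ∀ x y : G, l (x * y) = l x + (α x : ℂ) * l y}
  zero_mem' := by intro x y; simp
  add_mem' := by
    intro a b ha hb x y
    simp only [Pi.add_apply, ha x y, hb x y]; ring
  smul_mem' := by
    intro c a ha x y
    simp only [Pi.smul_apply, smul_eq_mul, ha x y]; ring

/-- The map `γ ↦ 1 - α γ`, which is an `α`-twisted cocycle. -/
noncomputable def oneSubAlpha {G : Type*} [Group G] (α : G →* ℂˣ) : twistedCocycles α :=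
  ⟨fun γ => 1 - (α γ : ℂ), by
    intro x y
    simp only [map_mul, Units.val_mul]
    ring⟩

/-!
A twisted cocycle `λ` for `α` is the same thing as a homomorphism `x ↦ (z ↦ α x * z + λ x)`
into the affine group of `ℂ` lifting `α`. On the free group such homomorphisms are freely
determined by arbitrary values `f` of `λ` on the `2g` generators, and they descend to `Γ_g`
exactly when they kill the relator. Since `α` is abelian, the image of each commutator
`[aᵢ, bᵢ]` is a translation, by `(1 - α bᵢ) f aᵢ + (α aᵢ - 1) f bᵢ`, so the condition is a
single linear equation on `f`, nontrivial as soon as `α ≠ 1`. Hence `Z¹_α(Γ_g, ℂ)` has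
dimension `2g - 1`, and dividing out the nonzero cocycle `1 - α` leaves `2g - 2`.
-/

open SemidirectProduct Module
open scoped commutatorElement

lemma Fintype.linearCombination_ne_zero {ι R M : Type*} [Fintype ι] [Semiring R]
    [AddCommMonoid M] [Module R M] {v : ι → M} (hv : v ≠ 0) :
    Fintype.linearCombination R v ≠ 0 := by
  classical
  contrapose! hv
  ext i
  simpa using LinearMap.congr_fun hv (Pi.single i 1)

lemma FreeGroup.lift_surfaceRelator {g : ℕ} {H : Type*} [Group H] (φ : Fin g × Bool → H) :
    FreeGroup.lift φ (surfaceRelator g) =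
      (List.ofFn fun i => ⁅φ (i, true), φ (i, false)⁆).prod := by
  simp [surfaceRelator, map_list_prod, List.map_ofFn, Function.comp_def, commutatorElement_def]

noncomputable def affineAction : ℂˣ →* MulAut (Multiplicative ℂ) :=
  (MulAutMultiplicative ℂ).symm.toMonoidHom.comp (DistribMulAction.toAddAut ℂˣ ℂ)

/-- The element `⟨ofAdd t, u⟩` is the affine map `z ↦ u * z + t` of `ℂ`; the product is
composition. -/
abbrev AffineGroup := Multiplicative ℂ ⋊[affineAction] ℂˣ

namespace AffineGroup

lemma toAdd_mul_left (a b : AffineGroup) :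
    (a * b).left.toAdd = a.left.toAdd + a.right * b.left.toAdd := rfl

lemma toAdd_inv_left (a : AffineGroup) :
    a⁻¹.left.toAdd = ↑a.right⁻¹ * -a.left.toAdd := rfl

lemma commutatorElement_eq_inl (a b : AffineGroup) :
    ⁅a, b⁆ = inl (.ofAdd ((1 - b.right) * a.left.toAdd + (a.right - 1) * b.left.toAdd)) := by
  ext
  · simp only [commutatorElement_def, toAdd_mul_left, toAdd_inv_left, left_inl, toAdd_ofAdd,
      mul_right, inv_right, Units.val_mul, Units.val_inv_eq_inv_val]
    field_simp
    ring
  · simp [commutatorElement_def, mul_comm a.right]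

lemma list_prod_ofFn_inl {n : ℕ} (c : Fin n → ℂ) :
    (List.ofFn fun i => (inl (.ofAdd (c i)) : AffineGroup)).prod = inl (.ofAdd (∑ i, c i)) := by
  rw [ofAdd_sum, ← List.prod_ofFn, map_list_prod, List.map_ofFn]
  rfl

end AffineGroup

lemma oneSubAlpha_ne_zero {G : Type*} [Group G] {α : G →* ℂˣ} (hα : α ≠ 1) :
    oneSubAlpha α ≠ 0 := by
  contrapose! hα
  ext x
  have h : 1 - (α x : ℂ) = 0 := congrArg (fun l : twistedCocycles α => l.1 x) hα
  exact (sub_eq_zero.1 h).symm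

namespace twistedCocycles

section Group

variable {G : Type*} [Group G] {β : G →* ℂˣ}

noncomputable def toAffineHom (l : twistedCocycles β) : G →* AffineGroup :=
  MonoidHom.mk' (fun x => ⟨.ofAdd (l.1 x), β x⟩) fun x y => by
    ext
    · exact l.2 x y
    · exact congrArg Units.val (map_mul β x y)

lemma toAffineHom_injective : Function.Injective (toAffineHom (β := β)) := by
  intro l l' h
  ext x
  exact congrArg (fun ψ : G →* AffineGroup => (ψ x).left.toAdd) h

noncomputable def ofAffineHom (ψ : G →* AffineGroup) (hψ : rightHom.comp ψ = β) :
    twistedCocycles β :=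
  ⟨fun x => (ψ x).left.toAdd, fun x y => by
    change (ψ (x * y)).left.toAdd = (ψ x).left.toAdd + β x * (ψ y).left.toAdd
    rw [map_mul, AffineGroup.toAdd_mul_left, ← hψ]
    rfl⟩

end Group

section PresentedGroup

variable {X : Type*} {rels : Set (FreeGroup X)} (α : PresentedGroup rels →* ℂˣ)

noncomputable def restrictGenerators : twistedCocycles α →ₗ[ℂ] (X → ℂ) where
  toFun l x := l.1 (.of x)
  map_add' _ _ := rfl
  map_smul' _ _ := rfl

lemma restrictGenerators_injective : Function.Injective (restrictGenerators α) := by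
  intro l l' h
  apply toAffineHom_injective
  refine PresentedGroup.ext fun x => ?_
  ext
  · exact congrFun h x
  · rfl

lemma finiteDimensional [Finite X] : FiniteDimensional ℂ (twistedCocycles α) :=
  Module.Finite.of_injective _ (restrictGenerators_injective α)

noncomputable def affineLift (f : X → ℂ) : FreeGroup X →* AffineGroup :=
  FreeGroup.lift fun x => ⟨.ofAdd (f x), α (.of x)⟩

lemma affineLift_restrictGenerators (l : twistedCocycles α) :
    affineLift α (restrictGenerators α l) = (toAffineHom l).comp (PresentedGroup.mk rels) :=
  FreeGroup.ext_hom _ _ fun _ => FreeGroup.lift_apply_of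

lemma mem_range_restrictGenerators_iff (f : X → ℂ) :
    f ∈ LinearMap.range (restrictGenerators α) ↔ ∀ r ∈ rels, affineLift α f r = 1 := by
  constructor
  · rintro ⟨l, rfl⟩ r hr
    rw [affineLift_restrictGenerators, MonoidHom.comp_apply, PresentedGroup.one_of_mem hr,
      map_one]
  · intro h
    let ψ := PresentedGroup.toGroup h
    have hψ_of (x : X) : ψ (.of x) = ⟨.ofAdd (f x), α (.of x)⟩ := PresentedGroup.toGroup.of h
    have hψ : rightHom.comp ψ = α := PresentedGroup.ext fun x => by
      rw [MonoidHom.comp_apply, hψ_of]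
      rfl
    refine ⟨ofAffineHom ψ hψ, funext fun x => ?_⟩
    change (ψ (.of x)).left.toAdd = f x
    rw [hψ_of]
    rfl

end PresentedGroup

end twistedCocycles

namespace SurfaceGroup

open twistedCocycles

variable {g : ℕ} (α : SurfaceGroup g →* ℂˣ)

/-- The Fox derivatives of `∏ᵢ [aᵢ, bᵢ]`, evaluated through the abelian character `α`. -/
noncomputable def relatorWeight : Fin g × Bool → ℂ
  | (i, true) => 1 - α (PresentedGroup.of (i, false))
  | (i, false) => α (PresentedGroup.of (i, true)) - 1

lemma affineLift_surfaceRelator (f : Fin g × Bool → ℂ) :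
    affineLift α f (surfaceRelator g) =
      inl (.ofAdd (Fintype.linearCombination ℂ (relatorWeight α) f)) := by
  change FreeGroup.lift _ (surfaceRelator g) = _
  simp only [FreeGroup.lift_surfaceRelator, AffineGroup.commutatorElement_eq_inl,
    AffineGroup.list_prod_ofFn_inl, toAdd_ofAdd, Fintype.linearCombination_apply,
    Fintype.sum_prod_type, Fintype.sum_bool, relatorWeight, smul_eq_mul, mul_comm (f _)]
  -- the sides differ only in reading `α` on `SurfaceGroup g` or on `PresentedGroup {…}`
  rfl

lemma relatorWeight_ne_zero (hα : α ≠ 1) : relatorWeight α ≠ 0 := by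
  contrapose! hα
  refine PresentedGroup.ext fun ⟨i, b⟩ => ?_
  cases b
  · have h : 1 - (α (PresentedGroup.of (i, false)) : ℂ) = 0 := congrFun hα (i, true)
    exact Units.ext (sub_eq_zero.1 h).symm
  · have h : (α (PresentedGroup.of (i, true)) : ℂ) - 1 = 0 := congrFun hα (i, false)
    exact Units.ext (sub_eq_zero.1 h)

lemma range_restrictGenerators :
    LinearMap.range (restrictGenerators α) =
      LinearMap.ker (Fintype.linearCombination ℂ (relatorWeight α)) := by
  ext f
  refine (mem_range_restrictGenerators_iff α f).trans ?_
  simp only [Set.mem_singleton_iff, forall_eq, affineLift_surfaceRelator,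
    map_eq_one_iff _ inl_injective, ofAdd_eq_one, LinearMap.mem_ker]

lemma finrank_twistedCocycles (hα : α ≠ 1) : finrank ℂ (twistedCocycles α) = 2 * g - 1 := by
  have h := Module.Dual.finrank_ker_add_one_of_ne_zero
    (Fintype.linearCombination_ne_zero (R := ℂ) (relatorWeight_ne_zero α hα))
  rw [← range_restrictGenerators, LinearMap.finrank_range_of_inj (restrictGenerators_injective α),
    Module.finrank_fintype_fun_eq_card, Fintype.card_prod, Fintype.card_fin,
    Fintype.card_bool] at h
  change finrank ℂ (twistedCocycles α) + 1 = g * 2 at h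
  omega

end SurfaceGroup

theorem finrank_twistedCohomology_surfaceGroup_general (g : ℕ)
    (α : SurfaceGroup g →* ℂˣ) (hα : α ≠ 1) :
    oneSubAlpha α ≠ 0 ∧
      Module.finrank ℂ
        (↥(twistedCocycles α) ⧸ Submodule.span ℂ {oneSubAlpha α}) = 2 * g - 2 := by
  have hne := oneSubAlpha_ne_zero hα
  have : FiniteDimensional ℂ (twistedCocycles α) := twistedCocycles.finiteDimensional α
  refine ⟨hne, ?_⟩
  have h := Submodule.finrank_quotient_add_finrank (ℂ ∙ oneSubAlpha α)
  rw [finrank_span_singleton hne, SurfaceGroup.finrank_twistedCocycles α hα] at h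
  omega

/-- for `g ≥ 2` and a nontrivial homomorphism `α : Γ_g → ℂˣ`,
the twisted cocycle `γ ↦ 1 - α γ` is nonzero, and the quotient space
`H¹_α(Γ_g, ℂ) = Z¹_α(Γ_g, ℂ) / ℂ·(1 - α)` has dimension `2g - 2`. -/
theorem finrank_twistedCohomology_surfaceGroup (g : ℕ) (hg : 2 ≤ g)
    (α : SurfaceGroup g →* ℂˣ) (hα : α ≠ 1) :
    oneSubAlpha α ≠ 0 ∧
      Module.finrank ℂ
        (↥(twistedCocycles α) ⧸ Submodule.span ℂ {oneSubAlpha α}) = 2 * g - 2 :=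
  finrank_twistedCohomology_surfaceGroup_general g α hα
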